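/- arXiv:2208.01291 — 4 statements merged into one kernel-verified Lean document; each statement's English description precedes it below -/
import Mathlib

section
/- Under the inner conditions of Lemma 1, the integrated energy balance (3-14b) holds: if x : ℝ → ℝⁿ is differentiable with ẋ(t) = ā(x(t)) + B(x(t)) v(t), v is continuous, ā, B, c̄, D̄, ∇P are continuous, and z̄(t) := c̄(x(t)) + D̄(x(t)) v(t), then for all t₁ ≤ t₂, P(x(t₂)) − P(x(t₁)) = ∫_{t₁}^{t₂} ( ½ ‖v(τ)‖² − ½ ‖z̄(τ)‖² ) dτ. -/
/-!
Along a trajectory, the chain rule gives `d/dt P(x) = ⟨∇P(x), ā(x) + B(x) v⟩`. Expanding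
`‖c̄ + D̄ v‖² = ‖c̄‖² + 2⟨D̄ᵀ c̄, v⟩ + ‖v‖²` (using `D̄ᵀ D̄ = I`) and substituting
`⟨∇P, ā⟩ = -½‖c̄‖²` and `Bᵀ ∇P = -D̄ᵀ c̄` shows that this rate equals the supply rate
`½‖v‖² − ½‖z̄‖²` pointwise, so the energy balance is the fundamental theorem of calculus.
-/

open Matrix

noncomputable def supplyRate {ι κ : Type*} [Fintype ι] [Fintype κ] (v : ι → ℝ) (z : κ → ℝ) : ℝ :=
  (1 / 2 : ℝ) * (v ⬝ᵥ v) - (1 / 2 : ℝ) * (z ⬝ᵥ z)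

section Pointwise

variable {ι κ μ : Type*} [Fintype ι] [Fintype κ] [Fintype μ]

theorem dotProduct_mulVec_eq_transpose_mulVec_dotProduct (u : ι → ℝ) (A : Matrix ι κ ℝ)
    (w : κ → ℝ) : u ⬝ᵥ (A *ᵥ w) = (Aᵀ *ᵥ u) ⬝ᵥ w := by
  rw [dotProduct_mulVec, mulVec_transpose]

theorem mulVec_dotProduct_mulVec_self_of_transpose_mul_self_eq_one [DecidableEq κ]
    {D : Matrix μ κ ℝ} (hD : Dᵀ * D = 1) (w : κ → ℝ) : (D *ᵥ w) ⬝ᵥ (D *ᵥ w) = w ⬝ᵥ w := by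
  rw [dotProduct_mulVec_eq_transpose_mulVec_dotProduct, mulVec_mulVec, hD, one_mulVec]

theorem dotProduct_add_mulVec_eq_supplyRate [DecidableEq κ] {g a : ι → ℝ} {B : Matrix ι κ ℝ}
    {c : μ → ℝ} {D : Matrix μ κ ℝ} (h1 : g ⬝ᵥ a + (1 / 2 : ℝ) * (c ⬝ᵥ c) = 0)
    (h2 : Bᵀ *ᵥ g + Dᵀ *ᵥ c = 0) (h3 : Dᵀ * D = 1) (w : κ → ℝ) :
    g ⬝ᵥ (a + B *ᵥ w) = supplyRate w (c + D *ᵥ w) := by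
  have hB : g ⬝ᵥ (B *ᵥ w) = -(c ⬝ᵥ (D *ᵥ w)) := by
    rw [dotProduct_mulVec_eq_transpose_mulVec_dotProduct, eq_neg_of_add_eq_zero_left h2,
      neg_dotProduct, ← dotProduct_mulVec_eq_transpose_mulVec_dotProduct]
  have hD := mulVec_dotProduct_mulVec_self_of_transpose_mul_self_eq_one h3 w
  simp only [supplyRate, dotProduct_add, add_dotProduct, dotProduct_comm (D *ᵥ w) c]
  linear_combination h1 + hB + (1 / 2 : ℝ) * hD

end Pointwise

theorem stmt15_general (n p q : ℕ)
    (abar : (Fin n → ℝ) → (Fin n → ℝ))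
    (B : (Fin n → ℝ) → Matrix (Fin n) (Fin p) ℝ)
    (cbar : (Fin n → ℝ) → (Fin q → ℝ))
    (Dbar : (Fin n → ℝ) → Matrix (Fin q) (Fin p) ℝ)
    (P : (Fin n → ℝ) → ℝ) (gradP : (Fin n → ℝ) → (Fin n → ℝ))
    (hPdiff : Differentiable ℝ P)
    (hgrad : ∀ x h, fderiv ℝ P x h = gradP x ⬝ᵥ h)
    (hcbar : Continuous cbar) (hDbar : Continuous Dbar)
    (h1 : ∀ x, gradP x ⬝ᵥ abar x + (1 / 2 : ℝ) * (cbar x ⬝ᵥ cbar x) = 0)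
    (h2 : ∀ x, (B x)ᵀ *ᵥ gradP x + (Dbar x)ᵀ *ᵥ cbar x = 0)
    (h3 : ∀ x, (Dbar x)ᵀ * Dbar x = 1)
    (x : ℝ → (Fin n → ℝ)) (v : ℝ → (Fin p → ℝ)) (hv : Continuous v)
    (hx : ∀ t, HasDerivAt x (abar (x t) + B (x t) *ᵥ v t) t) :
    ∀ t₁ t₂ : ℝ, t₁ ≤ t₂ →
      P (x t₂) - P (x t₁)
        = ∫ τ in t₁..t₂,
            ((1 / 2 : ℝ) * (v τ ⬝ᵥ v τ)
              - (1 / 2 : ℝ)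
                * ((cbar (x τ) + Dbar (x τ) *ᵥ v τ) ⬝ᵥ (cbar (x τ) + Dbar (x τ) *ᵥ v τ))) := by
  intro t₁ t₂ _
  have hxc : Continuous x := continuous_iff_continuousAt.2 fun t => (hx t).continuousAt
  have hderiv (t : ℝ) :
      HasDerivAt (fun τ => P (x τ)) (supplyRate (v t) (cbar (x t) + Dbar (x t) *ᵥ v t)) t := by
    have := (hPdiff (x t)).hasFDerivAt.comp_hasDerivAt t (hx t)
    rwa [hgrad, dotProduct_add_mulVec_eq_supplyRate (h1 _) (h2 _) (h3 _)] at this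
  have hz : Continuous fun τ => cbar (x τ) + Dbar (x τ) *ᵥ v τ :=
    (hcbar.comp hxc).add ((hDbar.comp hxc).matrix_mulVec hv)
  have hint : Continuous fun τ => supplyRate (v τ) (cbar (x τ) + Dbar (x τ) *ᵥ v τ) :=
    (continuous_const.mul (hv.dotProduct hv)).sub (continuous_const.mul (hz.dotProduct hz))
  exact (intervalIntegral.integral_eq_sub_of_hasDerivAt (fun t _ => hderiv t)
    (hint.intervalIntegrable t₁ t₂)).symm

/-- Under the inner conditions of Lemma 1, the integrated energy balance (3-14b) holds
along every trajectory: `P(x(t₂)) − P(x(t₁)) = ∫_{t₁}^{t₂} (½‖v‖² − ½‖z̄‖²) dτ`. -/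
theorem stmt15 (n p q : ℕ) (hn : 0 < n) (hp : 0 < p) (hq : 0 < q)
    (abar : (Fin n → ℝ) → (Fin n → ℝ))
    (B : (Fin n → ℝ) → Matrix (Fin n) (Fin p) ℝ)
    (cbar : (Fin n → ℝ) → (Fin q → ℝ))
    (Dbar : (Fin n → ℝ) → Matrix (Fin q) (Fin p) ℝ)
    (P : (Fin n → ℝ) → ℝ) (gradP : (Fin n → ℝ) → (Fin n → ℝ))
    (hPdiff : Differentiable ℝ P)
    (hgrad : ∀ x h, fderiv ℝ P x h = gradP x ⬝ᵥ h)
    (habar : Continuous abar) (hB : Continuous B) (hcbar : Continuous cbar)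
    (hDbar : Continuous Dbar) (hgradc : Continuous gradP)
    (h1 : ∀ x, gradP x ⬝ᵥ abar x + (1 / 2 : ℝ) * (cbar x ⬝ᵥ cbar x) = 0)
    (h2 : ∀ x, (B x)ᵀ *ᵥ gradP x + (Dbar x)ᵀ *ᵥ cbar x = 0)
    (h3 : ∀ x, (Dbar x)ᵀ * Dbar x = 1)
    (x : ℝ → (Fin n → ℝ)) (v : ℝ → (Fin p → ℝ)) (hv : Continuous v)
    (hx : ∀ t, HasDerivAt x (abar (x t) + B (x t) *ᵥ v t) t) :
    ∀ t₁ t₂ : ℝ, t₁ ≤ t₂ →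
      P (x t₂) - P (x t₁)
        = ∫ τ in t₁..t₂,
            ((1 / 2 : ℝ) * (v τ ⬝ᵥ v τ)
              - (1 / 2 : ℝ)
                * ((cbar (x τ) + Dbar (x τ) *ᵥ v τ) ⬝ᵥ (cbar (x τ) + Dbar (x τ) *ᵥ v τ))) :=
  stmt15_general n p q abar B cbar Dbar P gradP hPdiff hgrad hcbar hDbar h1 h2 h3 x v hv hx
end

section
/- Under the inner conditions of Lemma 1, if additionally P(x) ≥ 0 for all x and the trajectory starts at a point with P(x(0)) = 0, then the output energy never exceeds the input energy on any finite horizon: for every T ≥ 0, ∫₀^T ‖z̄(τ)‖² dτ ≤ ∫₀^T ‖v(τ)‖² dτ, where x : ℝ → ℝⁿ is differentiable with ẋ(t) = ā(x(t)) + B(x(t)) v(t), v is continuous, ā, B, c̄, D̄, ∇P are continuous, and z̄(t) := c̄(x(t)) + D̄(x(t)) v(t). -/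
open Matrix

/-!
Along any trajectory the conditions (i)–(iii) give the energy balance
`d/dt (2 P(x t)) = ‖v t‖² - ‖z̄ t‖²`: expanding `‖c̄ + D̄ v‖²` with `D̄ᵀ D̄ = I` and using (ii) to
rewrite the cross term `2 ⟨D̄ᵀ c̄, v⟩` as `-2 ⟨∇P, B v⟩`, then (i) for `⟨∇P, ā⟩`. Integrating over
`[0, T]` bounds the energy difference below by `2 P(x T) - 2 P(x 0) = 2 P(x T) ≥ 0`.
-/

theorem dotProduct_mulVec_self_of_transpose_mul_self_eq_one {m k : Type*} [Fintype m]
    [Fintype k] [DecidableEq k] {D : Matrix m k ℝ} (hD : Dᵀ * D = 1) (u : k → ℝ) :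
    (D *ᵥ u) ⬝ᵥ (D *ᵥ u) = u ⬝ᵥ u := by
  rw [dotProduct_mulVec, ← mulVec_transpose, mulVec_mulVec, hD, one_mulVec]

theorem two_mul_dotProduct_add_mulVec_eq_sub_of_lossless {m n k : Type*} [Fintype m]
    [Fintype n] [Fintype k] [DecidableEq k] {g a : n → ℝ} {B : Matrix n k ℝ} {c : m → ℝ}
    {D : Matrix m k ℝ} (h1 : g ⬝ᵥ a + (1 / 2 : ℝ) * (c ⬝ᵥ c) = 0)
    (h2 : Bᵀ *ᵥ g + Dᵀ *ᵥ c = 0) (h3 : Dᵀ * D = 1) (u : k → ℝ) :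
    2 * (g ⬝ᵥ (a + B *ᵥ u)) = u ⬝ᵥ u - (c + D *ᵥ u) ⬝ᵥ (c + D *ᵥ u) := by
  have hcross : g ⬝ᵥ (B *ᵥ u) = -(c ⬝ᵥ (D *ᵥ u)) := by
    rw [dotProduct_mulVec, dotProduct_mulVec, ← mulVec_transpose, ← mulVec_transpose,
      eq_neg_of_add_eq_zero_left h2, neg_dotProduct]
  rw [dotProduct_add, hcross, add_dotProduct, dotProduct_add, dotProduct_add,
    dotProduct_comm (D *ᵥ u) c, dotProduct_mulVec_self_of_transpose_mul_self_eq_one h3]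
  linarith

theorem intervalIntegral.integral_le_integral_of_hasDerivAt_sub {F g h : ℝ → ℝ} {a b : ℝ}
    (hF : ∀ t ∈ Set.uIcc a b, HasDerivAt F (g t - h t) t)
    (hg : IntervalIntegrable g MeasureTheory.volume a b)
    (hh : IntervalIntegrable h MeasureTheory.volume a b) (hFab : F a ≤ F b) :
    ∫ t in a..b, h t ≤ ∫ t in a..b, g t := by
  have hFTC := integral_eq_sub_of_hasDerivAt hF (hg.sub hh)
  rw [integral_sub hg hh] at hFTC
  linarith

theorem stmt16_general (n p q : ℕ)
    (abar : (Fin n → ℝ) → (Fin n → ℝ))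
    (B : (Fin n → ℝ) → Matrix (Fin n) (Fin p) ℝ)
    (cbar : (Fin n → ℝ) → (Fin q → ℝ))
    (Dbar : (Fin n → ℝ) → Matrix (Fin q) (Fin p) ℝ)
    (P : (Fin n → ℝ) → ℝ) (gradP : (Fin n → ℝ) → (Fin n → ℝ))
    (hPdiff : Differentiable ℝ P)
    (hgrad : ∀ x h, fderiv ℝ P x h = gradP x ⬝ᵥ h)
    (hcbar : Continuous cbar)
    (hDbar : Continuous Dbar)
    (h1 : ∀ x, gradP x ⬝ᵥ abar x + (1 / 2 : ℝ) * (cbar x ⬝ᵥ cbar x) = 0)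
    (h2 : ∀ x, (B x)ᵀ *ᵥ gradP x + (Dbar x)ᵀ *ᵥ cbar x = 0)
    (h3 : ∀ x, (Dbar x)ᵀ * Dbar x = 1)
    (hPnonneg : ∀ y, 0 ≤ P y)
    (x : ℝ → (Fin n → ℝ)) (v : ℝ → (Fin p → ℝ)) (hv : Continuous v)
    (hx : ∀ t, HasDerivAt x (abar (x t) + B (x t) *ᵥ v t) t)
    (hx0 : P (x 0) = 0) :
    ∀ T : ℝ, 0 ≤ T →
      (∫ τ in (0 : ℝ)..T,
          (cbar (x τ) + Dbar (x τ) *ᵥ v τ) ⬝ᵥ (cbar (x τ) + Dbar (x τ) *ᵥ v τ))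
        ≤ ∫ τ in (0 : ℝ)..T, v τ ⬝ᵥ v τ := by
  intro T _
  have hxc : Continuous x := continuous_iff_continuousAt.2 fun t => (hx t).continuousAt
  have hzc : Continuous fun t => cbar (x t) + Dbar (x t) *ᵥ v t :=
    (hcbar.comp hxc).add ((hDbar.comp hxc).matrix_mulVec hv)
  refine intervalIntegral.integral_le_integral_of_hasDerivAt_sub (F := fun t => 2 * P (x t))
    (fun t _ => ?_) ((hv.dotProduct hv).intervalIntegrable _ _)
    ((hzc.dotProduct hzc).intervalIntegrable _ _) (by simp [hx0, hPnonneg])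
  refine (((hPdiff (x t)).hasFDerivAt.comp_hasDerivAt t (hx t)).const_mul 2).congr_deriv ?_
  rw [hgrad]
  exact two_mul_dotProduct_add_mulVec_eq_sub_of_lossless (h1 _) (h2 _) (h3 _) _

/-- Under the inner conditions of Lemma 1, with nonnegative storage function `P` and a
trajectory starting at a point with `P(x(0)) = 0`, the output energy never exceeds the
input energy on any finite horizon: `∫₀^T ‖z̄‖² ≤ ∫₀^T ‖v‖²` for all `T ≥ 0`. -/
theorem stmt16 (n p q : ℕ) (hn : 0 < n) (hp : 0 < p) (hq : 0 < q)
    (abar : (Fin n → ℝ) → (Fin n → ℝ))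
    (B : (Fin n → ℝ) → Matrix (Fin n) (Fin p) ℝ)
    (cbar : (Fin n → ℝ) → (Fin q → ℝ))
    (Dbar : (Fin n → ℝ) → Matrix (Fin q) (Fin p) ℝ)
    (P : (Fin n → ℝ) → ℝ) (gradP : (Fin n → ℝ) → (Fin n → ℝ))
    (hPdiff : Differentiable ℝ P)
    (hgrad : ∀ x h, fderiv ℝ P x h = gradP x ⬝ᵥ h)
    (habar : Continuous abar) (hB : Continuous B) (hcbar : Continuous cbar)
    (hDbar : Continuous Dbar) (hgradc : Continuous gradP)
    (h1 : ∀ x, gradP x ⬝ᵥ abar x + (1 / 2 : ℝ) * (cbar x ⬝ᵥ cbar x) = 0)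
    (h2 : ∀ x, (B x)ᵀ *ᵥ gradP x + (Dbar x)ᵀ *ᵥ cbar x = 0)
    (h3 : ∀ x, (Dbar x)ᵀ * Dbar x = 1)
    (hPnonneg : ∀ y, 0 ≤ P y)
    (x : ℝ → (Fin n → ℝ)) (v : ℝ → (Fin p → ℝ)) (hv : Continuous v)
    (hx : ∀ t, HasDerivAt x (abar (x t) + B (x t) *ᵥ v t) t)
    (hx0 : P (x 0) = 0) :
    ∀ T : ℝ, 0 ≤ T →
      (∫ τ in (0 : ℝ)..T,
          (cbar (x τ) + Dbar (x τ) *ᵥ v τ) ⬝ᵥ (cbar (x τ) + Dbar (x τ) *ᵥ v τ))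
        ≤ ∫ τ in (0 : ℝ)..T, v τ ⬝ᵥ v τ :=
  stmt16_general n p q abar B cbar Dbar P gradP hPdiff hgrad hcbar hDbar h1 h2 h3 hPnonneg x v hv hx
    hx0
end

section
/- Under the inner conditions of Lemma 1 with all data C¹ and P twice continuously differentiable, the costate p(t) := ∇P(x(t)) satisfies the adjoint equation of the Hamiltonian extension along every trajectory: if x : ℝ → ℝⁿ is differentiable with ẋ(t) = ā(x(t)) + B(x(t)) v(t) and z̄(t) := c̄(x(t)) + D̄(x(t)) v(t), then d/dt p(t) = −( Dā(x(t)) + D_x[ B(·) v(t) ](x(t)) )ᵀ p(t) − ( Dc̄(x(t)) + D_x[ D̄(·) v(t) ](x(t)) )ᵀ z̄(t), where Dā, Dc̄ denote Jacobians and D_x[B(·)v], D_x[D̄(·)v] denote the Jacobians of x ↦ B(x)v and x ↦ D̄(x)v with v frozen. -/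
/-!
Along a trajectory, `ṗ = ∇²P(x) ẋ = ∇²P(x) (ā(x) + B(x) v)`. Since the Hessian is symmetric, the
`i`-th component of `ṗ` is the derivative of `∇P` in the direction `eᵢ` paired with `ā + B v`.
Differentiating in the direction `eᵢ` the identities (i), (ii) paired with `v`, and
`‖D̄(x) v‖² = ‖v‖²` (from (iii)) expresses these pairings through `Dā`, `Dₓ[B v]`, `Dc̄` and
`Dₓ[D̄ v]`, and the three resulting equations add up to the adjoint equation.
-/

open Matrix

section LineDeriv

variable {E F : Type*} [NormedAddCommGroup E] [NormedSpace ℝ E]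
  [NormedAddCommGroup F] [NormedSpace ℝ F] {x v : E}

theorem HasLineDerivAt.add {f g : E → F} {f' g' : F} (hf : HasLineDerivAt ℝ f f' x v)
    (hg : HasLineDerivAt ℝ g g' x v) : HasLineDerivAt ℝ (fun y => f y + g y) (f' + g') x v :=
  HasDerivAt.add hf hg

theorem HasLineDerivAt.const_mul {f : E → ℝ} {f' : ℝ} (c : ℝ) (hf : HasLineDerivAt ℝ f f' x v) :
    HasLineDerivAt ℝ (fun y => c * f y) (c * f') x v :=
  HasDerivAt.const_mul c hf

theorem HasLineDerivAt.eq_zero_of_forall_eq {f : E → F} {f' c : F}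
    (hf : HasLineDerivAt ℝ f f' x v) (hc : ∀ y, f y = c) : f' = 0 := by
  rw [funext hc] at hf
  simpa using hf.unique ((hasFDerivAt_const c x).hasLineDerivAt v)

variable {ι : Type*} [Fintype ι]

theorem HasDerivAt.dotProduct {u c : ℝ → ι → ℝ} {u' c' : ι → ℝ} {s : ℝ}
    (hu : HasDerivAt u u' s) (hc : HasDerivAt c c' s) :
    HasDerivAt (fun r => u r ⬝ᵥ c r) (u' ⬝ᵥ c s + u s ⬝ᵥ c') s := by
  have h : HasDerivAt (fun r => ∑ j, u r j * c r j) (∑ j, (u' j * c s j + u s j * c' j)) s :=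
    HasDerivAt.fun_sum fun j _ => (hasDerivAt_pi.1 hu j).mul (hasDerivAt_pi.1 hc j)
  exact h.congr_deriv (by rw [Finset.sum_add_distrib]; rfl)

theorem HasLineDerivAt.dotProduct {u c : E → ι → ℝ} {u' c' : ι → ℝ}
    (hu : HasLineDerivAt ℝ u u' x v) (hc : HasLineDerivAt ℝ c c' x v) :
    HasLineDerivAt ℝ (fun y => u y ⬝ᵥ c y) (u' ⬝ᵥ c x + u x ⬝ᵥ c') x v := by
  simpa [HasLineDerivAt] using HasDerivAt.dotProduct hu hc

theorem HasLineDerivAt.dotProduct_self {c : E → ι → ℝ} {c' : ι → ℝ}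
    (hc : HasLineDerivAt ℝ c c' x v) :
    HasLineDerivAt ℝ (fun y => c y ⬝ᵥ c y) (2 * (c' ⬝ᵥ c x)) x v := by
  simpa [two_mul, dotProduct_comm (c x)] using hc.dotProduct hc

end LineDeriv

section Gradient

variable {ι : Type*} [Fintype ι] [DecidableEq ι]

theorem dotProduct_apply_single_one (L : (ι → ℝ) →L[ℝ] ℝ) (u : ι → ℝ) :
    (fun i => L (Pi.single i 1)) ⬝ᵥ u = L u := by
  conv_rhs => rw [pi_eq_sum_univ' u]
  simp [dotProduct, mul_comm]

theorem hasFDerivAt_of_fderiv_apply_eq_dotProduct {P : (ι → ℝ) → ℝ} {g : (ι → ℝ) → ι → ℝ}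
    {x : ι → ℝ} (hg : ∀ y h, fderiv ℝ P y h = g y ⬝ᵥ h)
    (hP : DifferentiableAt ℝ (fderiv ℝ P) x) :
    HasFDerivAt g
      (ContinuousLinearMap.pi fun i => (fderiv ℝ (fderiv ℝ P) x).flip (Pi.single i 1)) x := by
  have hg' : g = fun y i => fderiv ℝ P y (Pi.single i 1) := by
    ext y i
    rw [hg, dotProduct_single_one]
  rw [hg', hasFDerivAt_pi]
  exact fun i => by simpa using hP.hasFDerivAt.clm_apply (hasFDerivAt_const (Pi.single i 1) x)

theorem IsSymmSndFDerivAt.dotProduct_fderiv_single {P : (ι → ℝ) → ℝ} {x : ι → ℝ}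
    (hP : IsSymmSndFDerivAt ℝ P x) (i : ι) (u : ι → ℝ) :
    (fun j => fderiv ℝ (fderiv ℝ P) x (Pi.single i 1) (Pi.single j 1)) ⬝ᵥ u
      = fderiv ℝ (fderiv ℝ P) x u (Pi.single i 1) := by
  rw [dotProduct_apply_single_one, hP]

end Gradient

section InnerSystem

variable {n p q : Type*} [Fintype n] [DecidableEq n] [Fintype p] [DecidableEq p] [Fintype q]
  {abar : (n → ℝ) → n → ℝ} {B : (n → ℝ) → Matrix n p ℝ} {cbar : (n → ℝ) → q → ℝ}
  {Dbar : (n → ℝ) → Matrix q p ℝ} {P : (n → ℝ) → ℝ} {gradP : (n → ℝ) → n → ℝ}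
  {x₀ : n → ℝ} {w : p → ℝ}

theorem fderiv_fderiv_apply_single_eq_adjoint (habar : DifferentiableAt ℝ abar x₀)
    (hB : DifferentiableAt ℝ (fun y => B y *ᵥ w) x₀) (hcbar : DifferentiableAt ℝ cbar x₀)
    (hDbar : DifferentiableAt ℝ (fun y => Dbar y *ᵥ w) x₀)
    (hP : DifferentiableAt ℝ (fderiv ℝ P) x₀) (hPsymm : IsSymmSndFDerivAt ℝ P x₀)
    (hgrad : ∀ x h, fderiv ℝ P x h = gradP x ⬝ᵥ h)
    (h1 : ∀ x, gradP x ⬝ᵥ abar x + (1 / 2 : ℝ) * (cbar x ⬝ᵥ cbar x) = 0)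
    (h2 : ∀ x, (B x)ᵀ *ᵥ gradP x + (Dbar x)ᵀ *ᵥ cbar x = 0)
    (h3 : ∀ x, (Dbar x)ᵀ * Dbar x = 1) (i : n) :
    fderiv ℝ (fderiv ℝ P) x₀ (abar x₀ + B x₀ *ᵥ w) (Pi.single i 1)
      = -((fderiv ℝ abar x₀ (Pi.single i 1)
            + fderiv ℝ (fun y => B y *ᵥ w) x₀ (Pi.single i 1)) ⬝ᵥ gradP x₀)
        - ((fderiv ℝ cbar x₀ (Pi.single i 1)
            + fderiv ℝ (fun y => Dbar y *ᵥ w) x₀ (Pi.single i 1))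
          ⬝ᵥ (cbar x₀ + Dbar x₀ *ᵥ w)) := by
  have h2w : ∀ x, gradP x ⬝ᵥ B x *ᵥ w + cbar x ⬝ᵥ Dbar x *ᵥ w = 0 := fun x => by
    simpa [add_dotProduct, mulVec_transpose, ← dotProduct_mulVec] using congrArg (· ⬝ᵥ w) (h2 x)
  have h3w : ∀ x, Dbar x *ᵥ w ⬝ᵥ Dbar x *ᵥ w = w ⬝ᵥ w := fun x => by
    rw [dotProduct_mulVec, ← mulVec_transpose, mulVec_mulVec, h3, one_mulVec]
  set e : n → ℝ := Pi.single i 1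
  have dG :
      HasLineDerivAt ℝ gradP (fun j => fderiv ℝ (fderiv ℝ P) x₀ e (Pi.single j 1)) x₀ e := by
    simpa using (hasFDerivAt_of_fderiv_apply_eq_dotProduct hgrad hP).hasLineDerivAt e
  have da := habar.hasFDerivAt.hasLineDerivAt e
  have dB := hB.hasFDerivAt.hasLineDerivAt e
  have dc := hcbar.hasFDerivAt.hasLineDerivAt e
  have dD := hDbar.hasFDerivAt.hasLineDerivAt e
  have k1 := ((dG.dotProduct da).add (dc.dotProduct_self.const_mul _)).eq_zero_of_forall_eq h1
  have k2 := ((dG.dotProduct dB).add (dc.dotProduct dD)).eq_zero_of_forall_eq h2w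
  have k3 := dD.dotProduct_self.eq_zero_of_forall_eq h3w
  rw [← hPsymm.dotProduct_fderiv_single, dotProduct_add]
  simp only [add_dotProduct, dotProduct_add, dotProduct_comm (gradP x₀),
    dotProduct_comm (cbar x₀) (fderiv ℝ (fun y => Dbar y *ᵥ w) x₀ e)] at k1 k2 ⊢
  linarith

end InnerSystem

/-- The `i`-th component of `Mᵀ w` is written `(M eᵢ) ⬝ᵥ w` with `eᵢ = Pi.single i 1`. -/
theorem stmt17_general (n p q : ℕ)
    (abar : (Fin n → ℝ) → (Fin n → ℝ))
    (B : (Fin n → ℝ) → Matrix (Fin n) (Fin p) ℝ)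
    (cbar : (Fin n → ℝ) → (Fin q → ℝ))
    (Dbar : (Fin n → ℝ) → Matrix (Fin q) (Fin p) ℝ)
    (P : (Fin n → ℝ) → ℝ) (gradP : (Fin n → ℝ) → (Fin n → ℝ))
    (habar : ContDiff ℝ 1 abar)
    (hB : ∀ w : Fin p → ℝ, ContDiff ℝ 1 fun y => B y *ᵥ w)
    (hcbar : ContDiff ℝ 1 cbar)
    (hDbar : ∀ w : Fin p → ℝ, ContDiff ℝ 1 fun y => Dbar y *ᵥ w)
    (hP2 : ContDiff ℝ 2 P)
    (hgrad : ∀ x h, fderiv ℝ P x h = gradP x ⬝ᵥ h)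
    (h1 : ∀ x, gradP x ⬝ᵥ abar x + (1 / 2 : ℝ) * (cbar x ⬝ᵥ cbar x) = 0)
    (h2 : ∀ x, (B x)ᵀ *ᵥ gradP x + (Dbar x)ᵀ *ᵥ cbar x = 0)
    (h3 : ∀ x, (Dbar x)ᵀ * Dbar x = 1)
    (x : ℝ → (Fin n → ℝ)) (v : ℝ → (Fin p → ℝ))
    (hx : ∀ t, HasDerivAt x (abar (x t) + B (x t) *ᵥ v t) t) :
    ∀ t, HasDerivAt (fun s => gradP (x s))
      (fun i =>
        -((fderiv ℝ abar (x t) (Pi.single i 1)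
              + fderiv ℝ (fun y => B y *ᵥ v t) (x t) (Pi.single i 1)) ⬝ᵥ gradP (x t))
        - ((fderiv ℝ cbar (x t) (Pi.single i 1)
              + fderiv ℝ (fun y => Dbar y *ᵥ v t) (x t) (Pi.single i 1))
            ⬝ᵥ (cbar (x t) + Dbar (x t) *ᵥ v t)))
      t := by
  intro t
  have hP : Differentiable ℝ (fderiv ℝ P) :=
    (hP2.fderiv_right le_rfl).differentiable one_ne_zero
  refine ((hasFDerivAt_of_fderiv_apply_eq_dotProduct hgrad (hP (x t))).comp_hasDerivAt t
    (hx t)).congr_deriv (funext fun i => ?_)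
  simpa using fderiv_fderiv_apply_single_eq_adjoint
    (habar.differentiable one_ne_zero (x t)) ((hB (v t)).differentiable one_ne_zero (x t))
    (hcbar.differentiable one_ne_zero (x t)) ((hDbar (v t)).differentiable one_ne_zero (x t))
    (hP (x t)) (hP2.contDiffAt.isSymmSndFDerivAt (by simp)) hgrad h1 h2 h3 i

/-- Under the inner conditions of Lemma 1 with `C¹` data and `C²` storage function, the
costate `p(t) := ∇P(x(t))` satisfies the adjoint equation of the Hamiltonian extension:
`ṗ = −(Dā(x) + Dₓ[B(·)v])ᵀ p − (Dc̄(x) + Dₓ[D̄(·)v])ᵀ z̄` along every trajectory.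
The `i`-th component of `Mᵀ w` is expressed as `(M eᵢ) ⬝ᵥ w` with `eᵢ = Pi.single i 1`. -/
theorem stmt17 (n p q : ℕ) (hn : 0 < n) (hp : 0 < p) (hq : 0 < q)
    (abar : (Fin n → ℝ) → (Fin n → ℝ))
    (B : (Fin n → ℝ) → Matrix (Fin n) (Fin p) ℝ)
    (cbar : (Fin n → ℝ) → (Fin q → ℝ))
    (Dbar : (Fin n → ℝ) → Matrix (Fin q) (Fin p) ℝ)
    (P : (Fin n → ℝ) → ℝ) (gradP : (Fin n → ℝ) → (Fin n → ℝ))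
    (habar : ContDiff ℝ 1 abar)
    (hB : ∀ w : Fin p → ℝ, ContDiff ℝ 1 fun y => B y *ᵥ w)
    (hcbar : ContDiff ℝ 1 cbar)
    (hDbar : ∀ w : Fin p → ℝ, ContDiff ℝ 1 fun y => Dbar y *ᵥ w)
    (hP2 : ContDiff ℝ 2 P)
    (hgrad : ∀ x h, fderiv ℝ P x h = gradP x ⬝ᵥ h)
    (h1 : ∀ x, gradP x ⬝ᵥ abar x + (1 / 2 : ℝ) * (cbar x ⬝ᵥ cbar x) = 0)
    (h2 : ∀ x, (B x)ᵀ *ᵥ gradP x + (Dbar x)ᵀ *ᵥ cbar x = 0)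
    (h3 : ∀ x, (Dbar x)ᵀ * Dbar x = 1)
    (x : ℝ → (Fin n → ℝ)) (v : ℝ → (Fin p → ℝ))
    (hx : ∀ t, HasDerivAt x (abar (x t) + B (x t) *ᵥ v t) t) :
    ∀ t, HasDerivAt (fun s => gradP (x s))
      (fun i =>
        -((fderiv ℝ abar (x t) (Pi.single i 1)
              + fderiv ℝ (fun y => B y *ᵥ v t) (x t) (Pi.single i 1)) ⬝ᵥ gradP (x t))
        - ((fderiv ℝ cbar (x t) (Pi.single i 1)
              + fderiv ℝ (fun y => Dbar y *ᵥ v t) (x t) (Pi.single i 1))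
            ⬝ᵥ (cbar (x t) + Dbar (x t) *ᵥ v t)))
      t :=
  stmt17_general n p q abar B cbar Dbar P gradP habar hB hcbar hDbar hP2 hgrad h1 h2 h3 x v hx
end

section
/- Stable image representation reproduces the plant transfer function: let A be an n×n, B an n×p, C an m×n, D an m×p, F a p×n, and V an invertible p×p complex matrix, and let s ∈ ℂ be such that sI − A and sI − (A + BF) are invertible and M(s) := F (sI − A − BF)⁻¹ B V + V is invertible. Then, with N(s) := (C + DF)(sI − A − BF)⁻¹ B V + D V, one has N(s) · M(s)⁻¹ = C (sI − A)⁻¹ B + D. -/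
/-! With `P = sI − A` and `Q = sI − A − BF` we have `P − Q = BF`, so the resolvent identity
`P⁻¹ (BF) Q⁻¹ = Q⁻¹ − P⁻¹` expands `G M` into `N`; cancelling the invertible `M` gives `N M⁻¹ = G`. -/

open Matrix

section

variable {ι κ ρ R : Type*} [Fintype ι] [DecidableEq ι] [Fintype ρ] [CommRing R]

theorem feedback_numerator_eq_transfer_mul_denominator {P Q : Matrix ι ι R}
    (B : Matrix ι ρ R) (C : Matrix κ ι R) (D : Matrix κ ρ R) (F : Matrix ρ ι R)
    (V : Matrix ρ ρ R) (hPQ : IsUnit P ↔ IsUnit Q) (hBF : B * F = P - Q) :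
    (C + D * F) * Q⁻¹ * B * V + D * V = (C * P⁻¹ * B + D) * (F * Q⁻¹ * B * V + V) := by
  have resolvent : P⁻¹ * (B * F) * Q⁻¹ = Q⁻¹ - P⁻¹ := by
    rw [hBF, ← neg_sub Q P, mul_neg, neg_mul, ← inv_sub_inv hPQ, neg_sub]
  have hC : C * (P⁻¹ * (B * F) * Q⁻¹) * (B * V) = C * (Q⁻¹ - P⁻¹) * (B * V) := by
    rw [resolvent]
  simp only [Matrix.mul_sub, Matrix.sub_mul, Matrix.mul_add, Matrix.add_mul,
    Matrix.mul_assoc] at hC ⊢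
  rw [hC]
  abel

end

theorem stmt18_general (n m p : ℕ)
    (A : Matrix (Fin n) (Fin n) ℂ) (B : Matrix (Fin n) (Fin p) ℂ)
    (C : Matrix (Fin m) (Fin n) ℂ) (D : Matrix (Fin m) (Fin p) ℂ)
    (F : Matrix (Fin p) (Fin n) ℂ) (V : Matrix (Fin p) (Fin p) ℂ)
    (s : ℂ)
    (h1 : IsUnit (s • (1 : Matrix (Fin n) (Fin n) ℂ) - A))
    (h2 : IsUnit (s • (1 : Matrix (Fin n) (Fin n) ℂ) - (A + B * F)))
    (hM : IsUnit (F * (s • (1 : Matrix (Fin n) (Fin n) ℂ) - A - B * F)⁻¹ * B * V + V)) :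
    ((C + D * F) * (s • (1 : Matrix (Fin n) (Fin n) ℂ) - A - B * F)⁻¹ * B * V + D * V)
        * (F * (s • (1 : Matrix (Fin n) (Fin n) ℂ) - A - B * F)⁻¹ * B * V + V)⁻¹
      = C * (s • (1 : Matrix (Fin n) (Fin n) ℂ) - A)⁻¹ * B + D := by
  have hQ : IsUnit (s • (1 : Matrix (Fin n) (Fin n) ℂ) - A - B * F) := sub_sub _ A _ ▸ h2
  rw [feedback_numerator_eq_transfer_mul_denominator B C D F V (iff_of_true h1 hQ)
      (sub_sub_cancel _ _).symm,
    mul_nonsing_inv_cancel_right _ _ ((isUnit_iff_isUnit_det _).mp hM)]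

/-- The stable image representation reproduces the plant transfer function:
with `M(s) = F (sI − A − BF)⁻¹ B V + V` and `N(s) = (C + DF)(sI − A − BF)⁻¹ B V + D V`,
one has `N(s) M(s)⁻¹ = C (sI − A)⁻¹ B + D`. -/
theorem stmt18 (n m p : ℕ)
    (A : Matrix (Fin n) (Fin n) ℂ) (B : Matrix (Fin n) (Fin p) ℂ)
    (C : Matrix (Fin m) (Fin n) ℂ) (D : Matrix (Fin m) (Fin p) ℂ)
    (F : Matrix (Fin p) (Fin n) ℂ) (V : Matrix (Fin p) (Fin p) ℂ)
    (hV : IsUnit V) (s : ℂ)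
    (h1 : IsUnit (s • (1 : Matrix (Fin n) (Fin n) ℂ) - A))
    (h2 : IsUnit (s • (1 : Matrix (Fin n) (Fin n) ℂ) - (A + B * F)))
    (hM : IsUnit (F * (s • (1 : Matrix (Fin n) (Fin n) ℂ) - A - B * F)⁻¹ * B * V + V)) :
    ((C + D * F) * (s • (1 : Matrix (Fin n) (Fin n) ℂ) - A - B * F)⁻¹ * B * V + D * V)
        * (F * (s • (1 : Matrix (Fin n) (Fin n) ℂ) - A - B * F)⁻¹ * B * V + V)⁻¹
      = C * (s • (1 : Matrix (Fin n) (Fin n) ℂ) - A)⁻¹ * B + D :=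
  stmt18_general n m p A B C D F V s h1 h2 hM
end
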